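/- In the enhanced conflict graph G_{K,N} of the traffic pattern on a K×N switch with all unicasts and one broadcast per input, the induced subgraph G_i on all broadcast subflow vertices together with the unicast vertices from a single input i is perfect. -/

import Mathlib

open Pointwise

/-- Vertices of the enhanced conflict graph of a `K × N` switch loaded with all
unicasts and one broadcast per input: `u i j` is the unicast subflow from input
`i` to output `j`, and `b i j` is the broadcast subflow from input `i` to
output `j`. -/
inductive SwitchVertex (K N : ℕ) where
  | u : Fin K → Fin N → SwitchVertex K N
  | b : Fin K → Fin N → SwitchVertex K N
deriving DecidableEq

namespace SwitchVertex

variable {K N : ℕ}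

/-- The input of a subflow. -/
def inp : SwitchVertex K N → Fin K
  | u i _ => i
  | b i _ => i

/-- The output of a subflow. -/
def out : SwitchVertex K N → Fin N
  | u _ j => j
  | b _ j => j

/-- Whether a subflow is a broadcast subflow. -/
def isBroadcast : SwitchVertex K N → Prop
  | u _ _ => False
  | b _ _ => True

end SwitchVertex

/-- The enhanced conflict graph `G_{K,N}`: two distinct subflows conflict iff they
share the output, or they share the input and are not both broadcast subflows
(broadcast subflows from the same input belong to the same flow, hence do not
conflict). -/
def GKN (K N : ℕ) : SimpleGraph (SwitchVertex K N) where
  Adj a b := a ≠ b ∧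
    (a.out = b.out ∨ (a.inp = b.inp ∧ ¬ (a.isBroadcast ∧ b.isBroadcast)))
  symm := by
    constructor
    rintro a b ⟨hne, h | ⟨h1, h2⟩⟩
    · exact ⟨hne.symm, Or.inl h.symm⟩
    · exact ⟨hne.symm, Or.inr ⟨h1.symm, fun hh => h2 ⟨hh.2, hh.1⟩⟩⟩
  loopless := by constructor; rintro a ⟨hne, _⟩; exact hne rfl

/-- A graph is perfect if for every induced subgraph the chromatic number equals
the clique number. -/
def SimpleGraph.IsPerfect {V : Type*} (G : SimpleGraph V) : Prop :=
  ∀ s : Set V, (G.induce s).chromaticNumber = ((G.induce s).cliqueNum : ℕ∞)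

/-!
Every induced subgraph is coloured with as many colours as its largest clique. The unicasts of
input `i` form a clique and get distinct colours; the broadcasts of input `i` are pairwise
non-adjacent and adjacent to all of them, so they share one further colour. Every other vertex
is a broadcast `b k j` with `k ≠ i`, all of whose neighbours sit at output `j`. The vertices at
output `j` form a clique, so after discarding the (at most two) colours that input `i` uses at
output `j`, enough colours remain to give these broadcasts distinct colours.
-/

open Finset

theorem Finset.exists_injOn_lt_notMem {α : Type*} (S : Finset α) (F : Finset ℕ) {m : ℕ}
    (h : #S + #F ≤ m) : ∃ f : α → ℕ, Set.InjOn f S ∧ ∀ a ∈ S, f a < m ∧ f a ∉ F := by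
  classical
  have hcard : Fintype.card S ≤ Fintype.card ↥(range m \ F) := by
    simpa using (le_card_sdiff F (range m)).trans' (by simp; omega)
  obtain ⟨e⟩ := Function.Embedding.nonempty_of_card_le hcard
  refine ⟨fun a => if ha : a ∈ S then e ⟨a, ha⟩ else 0, fun a ha b hb hab => ?_, fun a ha => ?_⟩
  · rw [mem_coe] at ha hb
    simp only [ha, hb, dite_true] at hab
    simpa using e.injective (Subtype.val_injective hab)
  · simpa [ha] using mem_sdiff.mp (e ⟨a, ha⟩).2

namespace SimpleGraph

variable {V W ι : Type*} {G : SimpleGraph V}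

theorem isPerfect_of_forall_colorable
    (h : ∀ s : Set V, (G.induce s).Colorable (G.induce s).cliqueNum) : G.IsPerfect :=
  fun s => le_antisymm (h s).chromaticNumber_le cliqueNum_le_chromaticNumber

theorem Embedding.card_le_cliqueNum [Fintype W] {H : SimpleGraph W} (f : H ↪g G) {Q : Finset V}
    (hQ : Q ⊆ univ.map f.toEmbedding) (hc : G.IsClique (Q : Set V)) : #Q ≤ H.cliqueNum := by
  obtain ⟨Q', -, rfl⟩ := subset_map_iff.mp hQ
  rw [card_map]
  refine IsClique.card_le_cliqueNum (tc := fun x hx y hy hxy => ?_)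
  exact f.map_adj_iff.mp (hc (mem_map_of_mem _ hx) (mem_map_of_mem _ hy) (f.injective.ne hxy))

theorem exists_extend_coloring [DecidableEq ι] (T : Finset V) (p : V → Prop) [DecidablePred p]
    (κ : V → ι) (hκ : ∀ v ∈ T, ∀ w ∈ T, ¬ p v → G.Adj v w → κ v = κ w) {m : ℕ}
    (hcard : ∀ j, #{v ∈ T | κ v = j} ≤ m) (c₀ : V → ℕ)
    (hc₀ : ∀ v ∈ T, ∀ w ∈ T, p v → p w → G.Adj v w → c₀ v ≠ c₀ w)
    (hc₀m : ∀ v ∈ T, p v → c₀ v < m) :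
    ∃ c : V → ℕ, (∀ v ∈ T, ∀ w ∈ T, G.Adj v w → c v ≠ c w) ∧ ∀ v ∈ T, c v < m := by
  classical
  have hfree : ∀ j, #{v ∈ T | κ v = j ∧ ¬ p v} + #(image c₀ {v ∈ T | κ v = j ∧ p v}) ≤ m := by
    intro j
    refine le_trans ?_ (hcard j)
    rw [← card_filter_add_card_filter_not (s := {v ∈ T | κ v = j}) (¬ p ·), filter_filter,
      filter_filter]
    simp only [not_not]
    gcongr
    exact card_image_le (f := c₀)
  choose h hinj hh using fun j => exists_injOn_lt_notMem _ _ (hfree j)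
  have hp_ne : ∀ v ∈ T, ∀ w ∈ T, p v → ¬ p w → G.Adj v w → c₀ v ≠ h (κ w) w := by
    intro v hv w hw hpv hpw hadj heq
    have hκw : κ w = κ v := hκ w hw v hv hpw hadj.symm
    refine (hh (κ w) w (by simp [hw, hpw])).2 (heq ▸ mem_image_of_mem c₀ ?_)
    simp [hv, hpv, hκw]
  refine ⟨fun v => if p v then c₀ v else h (κ v) v, fun v hv w hw hadj => ?_, fun v hv => ?_⟩
  · by_cases hpv : p v <;> by_cases hpw : p w <;> simp only [hpv, hpw, if_true, if_false]
    · exact hc₀ v hv w hw hpv hpw hadj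
    · exact hp_ne v hv w hw hpv hpw hadj
    · exact (hp_ne w hw v hv hpw hpv hadj.symm).symm
    · have hκvw := hκ v hv w hw hpv hadj
      rw [hκvw]
      exact (hinj (j := κ w)).ne (by simp [hv, hpv, hκvw]) (by simp [hw, hpw]) hadj.ne
  · by_cases hpv : p v <;> simp only [hpv, if_true, if_false]
    · exact hc₀m v hv hpv
    · exact (hh (κ v) v (by simp [hv, hpv])).1

end SimpleGraph

namespace SwitchVertex

variable {K N : ℕ}

instance : Finite (SwitchVertex K N) :=
  Finite.of_surjective
    (Sum.elim (fun p : Fin K × Fin N => u p.1 p.2) fun p : Fin K × Fin N => b p.1 p.2) <| by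
    rintro (⟨i, j⟩ | ⟨i, j⟩)
    exacts [⟨Sum.inl (i, j), rfl⟩, ⟨Sum.inr (i, j), rfl⟩]

theorem eq_of_isBroadcast {v w : SwitchVertex K N} (hv : v.isBroadcast) (hw : w.isBroadcast)
    (hinp : v.inp = w.inp) (hout : v.out = w.out) : v = w := by
  cases v <;> cases w <;> simp_all [isBroadcast, inp, out]

end SwitchVertex

namespace GKN

open SimpleGraph SwitchVertex

variable {K N : ℕ} {v w : SwitchVertex K N}

theorem adj_of_out_eq (hne : v ≠ w) (h : v.out = w.out) : (GKN K N).Adj v w :=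
  ⟨hne, Or.inl h⟩

theorem adj_of_inp_eq (hne : v ≠ w) (h : v.inp = w.inp) (hw : ¬ w.isBroadcast) :
    (GKN K N).Adj v w :=
  ⟨hne, Or.inr ⟨h, fun hvw => hw hvw.2⟩⟩

theorem out_eq_of_adj_of_isBroadcast (h : (GKN K N).Adj v w) (hv : v.isBroadcast)
    (hw : w.isBroadcast) : v.out = w.out :=
  h.2.resolve_right fun h' => h'.2 ⟨hv, hw⟩

theorem isClique_out_eq (j : Fin N) : (GKN K N).IsClique {v : SwitchVertex K N | v.out = j} :=
  fun _ hv _ hw hne => adj_of_out_eq hne (hv.trans hw.symm)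

variable {i : Fin K} {T : Finset (SwitchVertex K N)} {m : ℕ}

theorem exists_coloring_inp_eq (hT : ∀ v ∈ T, ¬ v.isBroadcast → v.inp = i)
    (hm : ∀ Q ⊆ T, (GKN K N).IsClique (Q : Set (SwitchVertex K N)) → #Q ≤ m) :
    ∃ c₀ : SwitchVertex K N → ℕ,
      (∀ v ∈ T, ∀ w ∈ T, v.inp = i → w.inp = i → (GKN K N).Adj v w → c₀ v ≠ c₀ w) ∧
        ∀ v ∈ T, v.inp = i → c₀ v < m := by
  classical
  set U := {v ∈ T | ¬ v.isBroadcast}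
  have hmemU : ∀ {v}, v ∈ T → ¬ v.isBroadcast → v ∈ U := fun hv hvb => mem_filter.mpr ⟨hv, hvb⟩
  have hU : (GKN K N).IsClique (U : Set (SwitchVertex K N)) := by
    intro v hv w hw hne
    rw [mem_coe, mem_filter] at hv hw
    exact adj_of_inp_eq hne ((hT v hv.1 hv.2).trans (hT w hw.1 hw.2).symm) hw.2
  obtain ⟨g, hg, hgU⟩ := exists_injOn_lt_notMem U ∅ (m := #U) (by simp)
  refine ⟨fun v => if v.isBroadcast then #U else g v, fun v hv w hw hvi hwi hadj => ?_,
    fun v hv hvi => ?_⟩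
  · by_cases hvb : v.isBroadcast <;> by_cases hwb : w.isBroadcast <;>
      simp only [hvb, hwb, if_true, if_false]
    · exact absurd (eq_of_isBroadcast hvb hwb (hvi.trans hwi.symm)
        (out_eq_of_adj_of_isBroadcast hadj hvb hwb)) hadj.ne
    · exact (hgU w (hmemU hw hwb)).1.ne'
    · exact (hgU v (hmemU hv hvb)).1.ne
    · exact hg.ne (hmemU hv hvb) (hmemU hw hwb) hadj.ne
  · by_cases hvb : v.isBroadcast <;> simp only [hvb, if_true, if_false]
    · have hvU : v ∉ U := fun h => (mem_filter.mp h).2 hvb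
      have hclique : (GKN K N).IsClique ((insert v U : Finset _) : Set (SwitchVertex K N)) := by
        rw [coe_insert]
        refine hU.insert fun w hw hne => adj_of_inp_eq hne ?_ (mem_filter.mp hw).2
        exact hvi.trans (hT w (mem_filter.mp hw).1 (mem_filter.mp hw).2).symm
      have := hm _ (insert_subset hv (filter_subset _ _)) hclique
      rw [card_insert_of_notMem hvU] at this
      omega
    · exact ((hgU v (hmemU hv hvb)).1).trans_le (hm U (filter_subset _ _) hU)

theorem exists_coloring (hT : ∀ v ∈ T, ¬ v.isBroadcast → v.inp = i)
    (hm : ∀ Q ⊆ T, (GKN K N).IsClique (Q : Set (SwitchVertex K N)) → #Q ≤ m) :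
    ∃ c : SwitchVertex K N → ℕ,
      (∀ v ∈ T, ∀ w ∈ T, (GKN K N).Adj v w → c v ≠ c w) ∧ ∀ v ∈ T, c v < m := by
  classical
  obtain ⟨c₀, hc₀, hc₀m⟩ := exists_coloring_inp_eq hT hm
  refine exists_extend_coloring T (·.inp = i) out (fun v hv w hw hvi hadj => ?_)
    (fun j => hm _ (filter_subset _ _) ((isClique_out_eq j).subset ?_)) c₀ hc₀ hc₀m
  · have hvb : v.isBroadcast := by_contra fun h => hvi (hT v hv h)
    refine hadj.2.resolve_right fun ⟨hinp, hnb⟩ => hnb ⟨hvb, by_contra fun hwb => ?_⟩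
    exact hvi (hinp.trans (hT w hw hwb))
  · intro v hv
    exact (mem_filter.mp hv).2

theorem colorable_cliqueNum_of_embedding (i : Fin K) {W : Type*} [Finite W] {H : SimpleGraph W}
    (f : H ↪g GKN K N) (hf : ∀ x, ¬ (f x).isBroadcast → (f x).inp = i) :
    H.Colorable H.cliqueNum := by
  have := Fintype.ofFinite W
  obtain ⟨c, hc, hcm⟩ := exists_coloring (T := univ.map f.toEmbedding) (i := i)
    (by simpa using hf) fun Q hQ hQc => f.card_le_cliqueNum hQ hQc
  exact (colorable_iff_exists_bdd_nat_coloring _).mpr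
    ⟨Coloring.mk (c ∘ f) fun h => hc _ (by simp) _ (by simp) (f.map_adj_iff.mpr h),
      fun x => hcm _ (by simp)⟩

end GKN

/-- The subgraph of `G_{K,N}` induced by all broadcast subflow vertices together
with the unicast vertices from a single input `i` is perfect. -/
theorem stmt7 (K N : ℕ) (i : Fin K) :
    ((GKN K N).induce
      {v : SwitchVertex K N | v.isBroadcast ∨ (¬ v.isBroadcast ∧ v.inp = i)}).IsPerfect := by
  exact SimpleGraph.isPerfect_of_forall_colorable fun s =>
    GKN.colorable_cliqueNum_of_embedding i
      ((SimpleGraph.Embedding.induce _).comp (SimpleGraph.Embedding.induce s))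
      fun x hx => (x.1.2.resolve_left hx).2
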